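/- arXiv:2604.23889 — 5 statements merged into one kernel-verified Lean document; each statement's English description precedes it below -/
import Mathlib

section
/- Suppose Q is a nonempty finite set of columns, each column q ∈ Q has cost c_q ∈ ℝ and coefficients A_q ∈ ℝ^m with ‖A_q‖₂ ≤ ā for a fixed ā > 0. Let π^out ∈ ℝ^m, define r_q(π) = c_q − A_qᵀπ, and partition Q into Q₋ = {q : r_q(π^out) < 0} and Q₊ = {q : r_q(π^out) ≥ 0}. Assume Q₋ is nonempty and set γ⁻ = −min_{q∈Q₋} r_q(π^out) and γ⁺ = min_{q∈Q₊} r_q(π^out) (with γ⁺ = +∞ if Q₊ is empty). If π^sep ∈ ℝ^m satisfies ‖π^sep − π^out‖₂ ≤ min{γ⁻, γ⁺}/(2ā), then every minimizer q* of q ↦ r_q(π^sep) over Q satisfies r_{q*}(π^out) < 0. -/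
open scoped RealInnerProductSpace

theorem stmt_1 {m : ℕ} {ι : Type*} (Q : Finset ι) (hQ : Q.Nonempty)
    (c : ι → ℝ) (A : ι → EuclideanSpace ℝ (Fin m))
    (abar : ℝ) (habar : 0 < abar) (hA : ∀ q ∈ Q, ‖A q‖ ≤ abar)
    (πout πsep : EuclideanSpace ℝ (Fin m))
    (r : ι → EuclideanSpace ℝ (Fin m) → ℝ)
    (hr : ∀ q π, r q π = c q - ⟪A q, π⟫)
    (Qm Qp : Finset ι)
    (hQm : Qm = Q.filter (fun q => r q πout < 0))
    (hQp : Qp = Q.filter (fun q => 0 ≤ r q πout))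
    (hQmne : Qm.Nonempty)
    (γm : ℝ) (hγm : γm = -(Qm.inf' hQmne (fun q => r q πout)))
    (γp : ℝ) (hγp : ∀ hp : Qp.Nonempty, γp = Qp.inf' hp (fun q => r q πout))
    (hclose : ‖πsep - πout‖ ≤ γm / (2 * abar) ∧
      (Qp.Nonempty → ‖πsep - πout‖ ≤ γp / (2 * abar))) :
    ∀ qstar ∈ Q, (∀ q ∈ Q, r qstar πsep ≤ r q πsep) → r qstar πout < 0 := by
  intro qstar hqs hmin
  by_contra hge
  push_neg at hge
  obtain ⟨qm, hqmQm, hqmmin⟩ := Qm.exists_mem_eq_inf' hQmne (fun q => r q πout)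
  rw [hQm, Finset.mem_filter] at hqmQm
  obtain ⟨hqmQ, hqmneg⟩ := hqmQm
  set δ := ‖πsep - πout‖ with hδ
  have hδ0 : 0 ≤ δ := norm_nonneg _
  have key : ∀ q ∈ Q, |r q πsep - r q πout| ≤ abar * δ := by
    intro q hq
    have heq : r q πsep - r q πout = ⟪A q, πout - πsep⟫ := by
      rw [hr, hr, inner_sub_right]; ring
    rw [heq]
    calc |⟪A q, πout - πsep⟫| ≤ ‖A q‖ * ‖πout - πsep‖ := abs_real_inner_le_norm _ _
      _ ≤ abar * δ := by
          rw [show ‖πout - πsep‖ = δ from norm_sub_rev _ _]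
          exact mul_le_mul_of_nonneg_right (hA q hq) hδ0
  have h1 : abar * δ ≤ γm / 2 := by
    calc abar * δ ≤ abar * (γm / (2 * abar)) :=
          mul_le_mul_of_nonneg_left hclose.1 habar.le
      _ = γm / 2 := by field_simp
  have hqstarQp : qstar ∈ Qp := by
    rw [hQp, Finset.mem_filter]; exact ⟨hqs, hge⟩
  have hp : Qp.Nonempty := ⟨qstar, hqstarQp⟩
  have hγpval := hγp hp
  have h2 : abar * δ ≤ γp / 2 := by
    calc abar * δ ≤ abar * (γp / (2 * abar)) :=
          mul_le_mul_of_nonneg_left (hclose.2 hp) habar.le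
      _ = γp / 2 := by field_simp
  have hγple : γp ≤ r qstar πout := by
    rw [hγpval]; exact Finset.inf'_le _ hqstarQp
  have hγp0 : 0 ≤ γp := by
    rw [hγpval]
    apply Finset.le_inf'
    intro q hq
    rw [hQp, Finset.mem_filter] at hq
    exact hq.2
  have hγmval : r qm πout = -γm := by rw [hγm, hqmmin, neg_neg]
  have hkm := key qm hqmQ
  have hks := key qstar hqs
  have hmin' := hmin qm hqmQ
  rw [abs_le] at hkm hks
  linarith [hkm.2, hks.1]
end

section
/- Under the setting of the local consistency result (finite column set Q with ‖A_q‖₂ ≤ ā, Q₋ nonempty, margins γ⁻ and γ⁺ defined from π^out), let π^ref ∈ ℝ^m with π^ref ≠ π^out, let α ∈ [0,1), and define π^sep = α·π^ref + (1−α)·π^out. If α ≤ min{γ⁻, γ⁺} / (2·ā·‖π^ref − π^out‖₂), then every minimizer q* of q ↦ r_q(π^sep) over Q satisfies r_{q*}(π^out) < 0. -/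
open scoped RealInnerProductSpace

theorem stmt_2 {m : ℕ} {ι : Type*} (Q : Finset ι) (hQ : Q.Nonempty)
    (c : ι → ℝ) (A : ι → EuclideanSpace ℝ (Fin m))
    (abar : ℝ) (habar : 0 < abar) (hA : ∀ q ∈ Q, ‖A q‖ ≤ abar)
    (πout πref : EuclideanSpace ℝ (Fin m)) (hne : πref ≠ πout)
    (α : ℝ) (hα0 : 0 ≤ α) (hα1 : α < 1)
    (πsep : EuclideanSpace ℝ (Fin m))
    (hsep : πsep = α • πref + (1 - α) • πout)
    (r : ι → EuclideanSpace ℝ (Fin m) → ℝ)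
    (hr : ∀ q π, r q π = c q - ⟪A q, π⟫)
    (Qm Qp : Finset ι)
    (hQm : Qm = Q.filter (fun q => r q πout < 0))
    (hQp : Qp = Q.filter (fun q => 0 ≤ r q πout))
    (hQmne : Qm.Nonempty)
    (γm : ℝ) (hγm : γm = -(Qm.inf' hQmne (fun q => r q πout)))
    (γp : ℝ) (hγp : ∀ hp : Qp.Nonempty, γp = Qp.inf' hp (fun q => r q πout))
    (hαbound : α ≤ γm / (2 * abar * ‖πref - πout‖) ∧
      (Qp.Nonempty → α ≤ γp / (2 * abar * ‖πref - πout‖))) :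
    ∀ qstar ∈ Q, (∀ q ∈ Q, r qstar πsep ≤ r q πsep) → r qstar πout < 0 := by
  intro qstar hqstarQ hmin
  by_contra hpos
  push_neg at hpos
  have hD : 0 < ‖πref - πout‖ := by
    rw [norm_pos_iff]; exact sub_ne_zero.mpr hne
  have hden : 0 < 2 * abar * ‖πref - πout‖ := by positivity
  -- express r at πsep
  have hdiff : ∀ q, r q πsep = r q πout - α * ⟪A q, πref - πout⟫ := by
    intro q
    rw [hr, hr, hsep, inner_add_right, real_inner_smul_right,
      real_inner_smul_right, inner_sub_right]
    ring
  have hbnd : ∀ q ∈ Q, |α * ⟪A q, πref - πout⟫| ≤ α * abar * ‖πref - πout‖ := by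
    intro q hq
    rw [abs_mul, abs_of_nonneg hα0]
    have h1 : |⟪A q, πref - πout⟫| ≤ ‖A q‖ * ‖πref - πout‖ :=
      abs_real_inner_le_norm _ _
    have h2 : ‖A q‖ * ‖πref - πout‖ ≤ abar * ‖πref - πout‖ :=
      mul_le_mul_of_nonneg_right (hA q hq) hD.le
    calc α * |⟪A q, πref - πout⟫| ≤ α * (abar * ‖πref - πout‖) :=
          mul_le_mul_of_nonneg_left (h1.trans h2) hα0
      _ = α * abar * ‖πref - πout‖ := by ring
  -- minimizer of Qm
  obtain ⟨qm, hqmQm, hqmval⟩ := Finset.exists_mem_eq_inf' hQmne (fun q => r q πout)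
  have hqm' := hqmQm
  rw [hQm, Finset.mem_filter] at hqm'
  have hqmQ : qm ∈ Q := hqm'.1
  have hqmneg : r qm πout < 0 := hqm'.2
  have hqmγ : r qm πout = -γm := by rw [hγm, ← hqmval, neg_neg]
  have hγmpos : 0 < γm := by linarith [hqmγ ▸ hqmneg]
  -- bounds: α * abar * D ≤ γm / 2
  have hm2 : α * abar * ‖πref - πout‖ ≤ γm / 2 := by
    have := (le_div_iff₀ hden).mp hαbound.1
    nlinarith
  -- qstar ∈ Qp
  have hqstarQp : qstar ∈ Qp := by
    rw [hQp, Finset.mem_filter]; exact ⟨hqstarQ, hpos⟩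
  have hQpne : Qp.Nonempty := ⟨qstar, hqstarQp⟩
  have hγpdef := hγp hQpne
  have hγple : γp ≤ r qstar πout := hγpdef ▸ Finset.inf'_le _ hqstarQp
  have hγpnn : 0 ≤ γp := by
    obtain ⟨qp, hqpQp, hqpval⟩ := Finset.exists_mem_eq_inf' hQpne (fun q => r q πout)
    rw [hQp, Finset.mem_filter] at hqpQp
    rw [hγpdef, hqpval]; exact hqpQp.2
  have hp2 : α * abar * ‖πref - πout‖ ≤ γp / 2 := by
    have := (le_div_iff₀ hden).mp (hαbound.2 hQpne)
    nlinarith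
  -- conclude
  have h1 : r qm πsep ≤ -γm + γm / 2 := by
    have := hbnd qm hqmQ
    have habs := abs_le.mp this
    rw [hdiff qm, hqmγ]
    linarith [habs.1, habs.2, hm2]
  have h2 : γp - γp / 2 ≤ r qstar πsep := by
    have := hbnd qstar hqstarQ
    have habs := abs_le.mp this
    rw [hdiff qstar]
    linarith [habs.1, habs.2, hp2, hγple]
  have := hmin qm hqmQ
  linarith
end

section
/- Let D ⊆ ℝ^m, b ∈ ℝ^m, λ > 0, and suppose π^out ∈ D maximizes bᵀπ over D and satisfies the error bound bᵀπ^out − bᵀπ ≥ λ·‖π − π^out‖₂ for all π ∈ D. Let P : ℝ^m → ℝ be nonnegative on D and let π^sep ∈ D maximize π ↦ bᵀπ − P(π) over D. Then ‖π^sep − π^out‖₂ ≤ P(π^out)/λ. -/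
open scoped RealInnerProductSpace

theorem stmt_7 {m : ℕ} (D : Set (EuclideanSpace ℝ (Fin m)))
    (b : EuclideanSpace ℝ (Fin m)) (lam : ℝ) (hlam : 0 < lam)
    (πout πsep : EuclideanSpace ℝ (Fin m))
    (houtD : πout ∈ D) (hsepD : πsep ∈ D)
    (hout : ∀ π ∈ D, ⟪b, π⟫ ≤ ⟪b, πout⟫)
    (herr : ∀ π ∈ D, lam * ‖π - πout‖ ≤ ⟪b, πout⟫ - ⟪b, π⟫)
    (P : EuclideanSpace ℝ (Fin m) → ℝ) (hP : ∀ π ∈ D, 0 ≤ P π)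
    (hsep : ∀ π ∈ D, ⟪b, π⟫ - P π ≤ ⟪b, πsep⟫ - P πsep) :
    ‖πsep - πout‖ ≤ P πout / lam := by
  rw [le_div_iff₀ hlam]
  have h1 := herr πsep hsepD
  have h2 := hsep πout houtD
  have h3 := hP πsep hsepD
  nlinarith [h1, h2, h3]
end

section
/- Let Q be a nonempty finite column set with costs c_q and coefficients A_q satisfying ‖A_q‖₂ ≤ ā, let π^out be a unique maximizer of bᵀπ over a set D ⊆ ℝ^m satisfying the error bound bᵀπ^out − bᵀπ ≥ λ·‖π − π^out‖₂ for all π ∈ D (λ > 0), and let π^ref ∈ ℝ^m with π^ref ≠ π^out. Suppose π^sep ∈ D maximizes over D the penalized objective bᵀπ − Σ_i (ε^-_i · max(π^ref_i − π_i, 0) + ε^+_i · max(π_i − π^ref_i, 0)) with 0 ≤ ε^-_i, ε^+_i ≤ ε_∞. Assume Q₋ = {q : r_q(π^out) < 0} is nonempty, with margins γ⁻ = −min_{q∈Q₋} r_q(π^out) and γ⁺ = min_{q∈Q₊} r_q(π^out) (γ⁺ = +∞ if Q₊ = ∅). If ε_∞ ≤ (λ / (√m · ‖π^out − π^ref‖₂))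 · (min{γ⁻, γ⁺} / (2ā)), then every minimizer q* of q ↦ r_q(π^sep) over Q satisfies r_{q*}(π^out) < 0. -/
open scoped RealInnerProductSpace

lemma sum_abs_le_sqrt_mul_norm {m : ℕ} (x : EuclideanSpace ℝ (Fin m)) :
    ∑ i, |x i| ≤ Real.sqrt m * ‖x‖ := by
  have h1 : (∑ i, |x i|) ^ 2 ≤ (m : ℝ) * ∑ i, (x i) ^ 2 := by
    have := sq_sum_le_card_mul_sum_sq (s := Finset.univ) (f := fun i => |x i|)
    simpa [sq_abs] using this
  have hx : ‖x‖ = Real.sqrt (∑ i, (x i) ^ 2) := by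
    simpa using EuclideanSpace.norm_eq x
  have h2 : ∑ i, |x i| ≤ Real.sqrt ((m : ℝ) * ∑ i, (x i) ^ 2) := by
    have := Real.sqrt_le_sqrt h1
    rwa [Real.sqrt_sq (Finset.sum_nonneg fun i _ => abs_nonneg _)] at this
  calc ∑ i, |x i| ≤ Real.sqrt ((m : ℝ) * ∑ i, (x i) ^ 2) := h2
    _ = Real.sqrt m * Real.sqrt (∑ i, (x i) ^ 2) := Real.sqrt_mul (Nat.cast_nonneg m) _
    _ = Real.sqrt m * ‖x‖ := by rw [hx]

theorem stmt_8 {m : ℕ} {ι : Type*} (Q : Finset ι) (hQ : Q.Nonempty)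
    (c : ι → ℝ) (A : ι → EuclideanSpace ℝ (Fin m))
    (abar : ℝ) (habar : 0 < abar) (hA : ∀ q ∈ Q, ‖A q‖ ≤ abar)
    (D : Set (EuclideanSpace ℝ (Fin m))) (b : EuclideanSpace ℝ (Fin m))
    (πout : EuclideanSpace ℝ (Fin m)) (houtD : πout ∈ D)
    (hout : ∀ π ∈ D, ⟪b, π⟫ ≤ ⟪b, πout⟫)
    (huniq : ∀ π ∈ D, (∀ π' ∈ D, ⟪b, π'⟫ ≤ ⟪b, π⟫) → π = πout)
    (lam : ℝ) (hlam : 0 < lam)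
    (herr : ∀ π ∈ D, lam * ‖π - πout‖ ≤ ⟪b, πout⟫ - ⟪b, π⟫)
    (πref : EuclideanSpace ℝ (Fin m)) (hne : πref ≠ πout)
    (εm εp : Fin m → ℝ) (εinf : ℝ)
    (hεm : ∀ i, 0 ≤ εm i ∧ εm i ≤ εinf)
    (hεp : ∀ i, 0 ≤ εp i ∧ εp i ≤ εinf)
    (P : EuclideanSpace ℝ (Fin m) → ℝ)
    (hPdef : ∀ π, P π = ∑ i, (εm i * max (πref i - π i) 0 + εp i * max (π i - πref i) 0))
    (πsep : EuclideanSpace ℝ (Fin m)) (hsepD : πsep ∈ D)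
    (hsep : ∀ π ∈ D, ⟪b, π⟫ - P π ≤ ⟪b, πsep⟫ - P πsep)
    (r : ι → EuclideanSpace ℝ (Fin m) → ℝ)
    (hr : ∀ q π, r q π = c q - ⟪A q, π⟫)
    (Qm Qp : Finset ι)
    (hQm : Qm = Q.filter (fun q => r q πout < 0))
    (hQp : Qp = Q.filter (fun q => 0 ≤ r q πout))
    (hQmne : Qm.Nonempty)
    (γm : ℝ) (hγm : γm = -(Qm.inf' hQmne (fun q => r q πout)))
    (γp : ℝ) (hγp : ∀ hp : Qp.Nonempty, γp = Qp.inf' hp (fun q => r q πout))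
    (hεbound : εinf ≤ (lam / (Real.sqrt m * ‖πout - πref‖)) * (γm / (2 * abar)) ∧
      (Qp.Nonempty → εinf ≤ (lam / (Real.sqrt m * ‖πout - πref‖)) * (γp / (2 * abar)))) :
    ∀ qstar ∈ Q, (∀ q ∈ Q, r qstar πsep ≤ r q πsep) → r qstar πout < 0 := by
  intro qstar hqQ hmin
  by_contra hpos
  push_neg at hpos
  have hqp : qstar ∈ Qp := by
    rw [hQp]; exact Finset.mem_filter.mpr ⟨hqQ, hpos⟩
  have hQpne : Qp.Nonempty := ⟨qstar, hqp⟩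
  -- basic positivity
  have hnorm : 0 < ‖πout - πref‖ := by
    rw [norm_pos_iff]
    exact sub_ne_zero.mpr (Ne.symm hne)
  have hm : 0 < m := by
    rcases Nat.eq_zero_or_pos m with h0 | h0
    · exfalso
      apply hne
      subst h0
      ext i
      exact absurd i.2 (by omega)
    · exact h0
  have hsqm : 0 < Real.sqrt m := Real.sqrt_pos.mpr (by exact_mod_cast hm)
  have hεinf : 0 ≤ εinf := le_trans (hεm ⟨0, hm⟩).1 (hεm ⟨0, hm⟩).2
  -- P πout bound
  have hPout : P πout ≤ εinf * (Real.sqrt m * ‖πout - πref‖) := by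
    rw [hPdef]
    have hstep : ∀ i : Fin m,
        εm i * max (πref i - πout i) 0 + εp i * max (πout i - πref i) 0
          ≤ εinf * |πout i - πref i| := by
      intro i
      rcases le_total (πout i) (πref i) with h | h
      · have h1 : max (πref i - πout i) 0 = πref i - πout i := max_eq_left (by linarith)
        have h2 : max (πout i - πref i) 0 = 0 := max_eq_right (by linarith)
        have h3 : |πout i - πref i| = πref i - πout i := by
          rw [abs_sub_comm]; exact abs_of_nonneg (by linarith)
        rw [h1, h2, h3, mul_zero, add_zero]
        exact mul_le_mul_of_nonneg_right (hεm i).2 (by linarith)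
      · have h1 : max (πref i - πout i) 0 = 0 := max_eq_right (by linarith)
        have h2 : max (πout i - πref i) 0 = πout i - πref i := max_eq_left (by linarith)
        have h3 : |πout i - πref i| = πout i - πref i := abs_of_nonneg (by linarith)
        rw [h1, h2, h3, mul_zero, zero_add]
        exact mul_le_mul_of_nonneg_right (hεp i).2 (by linarith)
    calc ∑ i, (εm i * max (πref i - πout i) 0 + εp i * max (πout i - πref i) 0)
        ≤ ∑ i, εinf * |πout i - πref i| := Finset.sum_le_sum fun i _ => hstep i
      _ = εinf * ∑ i, |(πout - πref : EuclideanSpace ℝ (Fin m)) i| := by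
          rw [Finset.mul_sum]
          exact Finset.sum_congr rfl fun i _ => by rfl
      _ ≤ εinf * (Real.sqrt m * ‖πout - πref‖) :=
          mul_le_mul_of_nonneg_left (sum_abs_le_sqrt_mul_norm _) hεinf
  -- P πsep nonneg
  have hPsep : 0 ≤ P πsep := by
    rw [hPdef]
    refine Finset.sum_nonneg fun i _ => add_nonneg ?_ ?_
    · exact mul_nonneg (hεm i).1 (le_max_right _ _)
    · exact mul_nonneg (hεp i).1 (le_max_right _ _)
  -- error bound on ‖πsep - πout‖
  have hkey : lam * ‖πsep - πout‖ ≤ εinf * (Real.sqrt m * ‖πout - πref‖) := by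
    have h1 := herr πsep hsepD
    have h2 := hsep πout houtD
    linarith
  set δ : ℝ := ‖πsep - πout‖ with hδ
  have hδγ : ∀ γ : ℝ, εinf ≤ (lam / (Real.sqrt m * ‖πout - πref‖)) * (γ / (2 * abar)) →
      abar * δ ≤ γ / 2 := by
    intro γ hγ
    have hpos' : 0 < Real.sqrt m * ‖πout - πref‖ := mul_pos hsqm hnorm
    have h3 : εinf * (Real.sqrt m * ‖πout - πref‖) ≤ lam * (γ / (2 * abar)) := by
      have := mul_le_mul_of_nonneg_right hγ (le_of_lt hpos')
      calc εinf * (Real.sqrt m * ‖πout - πref‖)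
          ≤ (lam / (Real.sqrt m * ‖πout - πref‖)) * (γ / (2 * abar)) *
            (Real.sqrt m * ‖πout - πref‖) := this
        _ = lam * (γ / (2 * abar)) := by
            field_simp
    have h4 : lam * δ ≤ lam * (γ / (2 * abar)) := le_trans hkey h3
    have h5 : δ ≤ γ / (2 * abar) := le_of_mul_le_mul_left h4 hlam
    have h6 : abar * δ ≤ abar * (γ / (2 * abar)) :=
      mul_le_mul_of_nonneg_left h5 (le_of_lt habar)
    calc abar * δ ≤ abar * (γ / (2 * abar)) := h6
      _ = γ / 2 := by field_simp
  have hδm : abar * δ ≤ γm / 2 := hδγ γm hεbound.1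
  have hδp : abar * δ ≤ γp / 2 := hδγ γp (hεbound.2 hQpne)
  -- deviation bounds
  have hdev : ∀ q ∈ Q, |r q πsep - r q πout| ≤ abar * δ := by
    intro q hq
    have : r q πsep - r q πout = ⟪A q, πout - πsep⟫ := by
      rw [hr, hr, inner_sub_right]
      ring
    rw [this]
    calc |⟪A q, πout - πsep⟫| ≤ ‖A q‖ * ‖πout - πsep‖ := abs_real_inner_le_norm _ _
      _ ≤ abar * δ := by
          rw [hδ, ← norm_neg (πsep - πout), neg_sub]
          exact mul_le_mul (hA q hq) le_rfl (norm_nonneg _) (le_of_lt habar)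
  -- pick qminus achieving the inf over Qm
  obtain ⟨qm, hqmQm, hqmeq⟩ := Finset.exists_mem_eq_inf' hQmne (fun q => r q πout)
  have hqm' : qm ∈ Q.filter (fun q => r q πout < 0) := by rwa [hQm] at hqmQm
  have hqmQ : qm ∈ Q := (Finset.mem_filter.mp hqm').1
  have hqmneg : r qm πout < 0 := (Finset.mem_filter.mp hqm').2
  have hqmval : r qm πout = -γm := by rw [hγm, hqmeq]; ring
  have hγmpos : 0 < γm := by linarith [hqmval ▸ hqmneg]
  -- γp properties
  have hγpval : γp = Qp.inf' hQpne (fun q => r q πout) := hγp hQpne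
  have hγple : γp ≤ r qstar πout := hγpval ▸ Finset.inf'_le _ hqp
  have hγpnn : 0 ≤ γp := by
    rw [hγpval]
    refine Finset.le_inf' _ _ fun q hq => ?_
    have hq' : q ∈ Q.filter (fun q => 0 ≤ r q πout) := by rwa [hQp] at hq
    exact (Finset.mem_filter.mp hq').2
  -- contradiction
  have hdm := hdev qm hqmQ
  have hds := hdev qstar hqQ
  have h1 : r qm πsep ≤ -γm / 2 := by
    have := abs_le.mp hdm
    linarith [hqmval ▸ this.2]
  have h2 : γp / 2 ≤ r qstar πsep := by
    have := abs_le.mp hds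
    linarith
  have h3 : r qstar πsep ≤ r qm πsep := hmin qm hqmQ
  linarith
end

section
/- Let D ⊆ ℝ^m be nonempty, closed, and convex; let π^ref ∈ D, let π^out ∈ D maximize bᵀπ over D, set d = π^out − π^ref, and assume d ≠ 0 and b = κ·d for some κ > 0. Let ε > 0 and let π^pen be the unique maximizer over D of φ(π) = bᵀπ − ε‖π − π^ref‖₂². Then π^pen lies on the segment [π^ref, π^out]; specifically, π^pen = α·π^ref + (1−α)·π^out where α = max{0, 1 − bᵀd/(2ε‖d‖₂²)}. -/
open scoped RealInnerProductSpace

theorem stmt_10 {m : ℕ} (D : Set (EuclideanSpace ℝ (Fin m)))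
    (hDne : D.Nonempty) (hDcl : IsClosed D) (hDcv : Convex ℝ D)
    (b πref πout : EuclideanSpace ℝ (Fin m))
    (hrefD : πref ∈ D) (houtD : πout ∈ D)
    (hout : ∀ π ∈ D, ⟪b, π⟫ ≤ ⟪b, πout⟫)
    (d : EuclideanSpace ℝ (Fin m)) (hd : d = πout - πref) (hdne : d ≠ 0)
    (κ : ℝ) (hκ : 0 < κ) (hb : b = κ • d)
    (ε : ℝ) (hε : 0 < ε)
    (πpen : EuclideanSpace ℝ (Fin m)) (hpenD : πpen ∈ D)
    (hpen : ∀ π ∈ D, ⟪b, π⟫ - ε * ‖π - πref‖ ^ 2 ≤ ⟪b, πpen⟫ - ε * ‖πpen - πref‖ ^ 2)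
    (α : ℝ) (hα : α = max 0 (1 - ⟪b, d⟫ / (2 * ε * ‖d‖ ^ 2))) :
    πpen = α • πref + (1 - α) • πout := by
  have hε2 : (2 * ε) ≠ 0 := by positivity
  set t : ℝ := κ / (2 * ε) with ht
  have htpos : 0 < t := by positivity
  set c : EuclideanSpace ℝ (Fin m) := πref + t • d with hc
  have hdn : (0 : ℝ) < ‖d‖ ^ 2 := by
    have : 0 < ‖d‖ := norm_pos_iff.mpr hdne
    positivity
  have hbd : ⟪b, d⟫ = κ * ‖d‖ ^ 2 := by
    rw [hb, real_inner_smul_left, real_inner_self_eq_norm_sq]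
  have hαt : α = max 0 (1 - t) := by
    rw [hα, hbd]
    congr 1
    rw [ht]
    field_simp
  have hκt : κ = 2 * ε * t := by
    rw [ht]; field_simp
  have key : ∀ π : EuclideanSpace ℝ (Fin m), ⟪b, π⟫ - ε * ‖π - πref‖ ^ 2
      = (⟪b, πref⟫ + ε * t ^ 2 * ‖d‖ ^ 2) - ε * ‖π - c‖ ^ 2 := by
    intro π
    have h1 : π - c = (π - πref) - t • d := by rw [hc]; abel
    have h2 : ⟪b, π⟫ = ⟪b, πref⟫ + κ * ⟪π - πref, d⟫ := by
      have : ⟪b, π - πref⟫ = κ * ⟪π - πref, d⟫ := by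
        rw [hb, real_inner_smul_left, real_inner_comm]
      rw [inner_sub_right] at this
      linarith
    have h3 : ‖π - c‖ ^ 2 = ‖π - πref‖ ^ 2 - 2 * (t * ⟪π - πref, d⟫) + t ^ 2 * ‖d‖ ^ 2 := by
      rw [h1, norm_sub_sq_real, real_inner_smul_right, norm_smul]
      simp [mul_pow, sq_abs]
    rw [h2, h3, hκt]
    ring
  have hle : ∀ π ∈ D, ‖πpen - c‖ ^ 2 ≤ ‖π - c‖ ^ 2 := by
    intro π hπ
    have h := hpen π hπ
    rw [key π, key πpen] at h
    nlinarith
  by_cases hcase : t ≤ 1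
  · -- interior case: q = c
    have hα' : α = 1 - t := by rw [hαt, max_eq_right (by linarith)]
    have hq : α • πref + (1 - α) • πout = c := by
      rw [hα', hc, hd]
      module
    have hcD : c ∈ D := by
      rw [← hq]
      exact hDcv hrefD houtD (by linarith) (by rw [hα']; linarith) (by ring)
    have h0 : ‖πpen - c‖ ^ 2 ≤ 0 := by simpa using hle c hcD
    have : πpen - c = 0 := by
      have := sq_nonneg ‖πpen - c‖
      have hn : ‖πpen - c‖ ^ 2 = 0 := le_antisymm h0 this
      simpa [pow_eq_zero_iff] using hn
    rw [hq]
    exact sub_eq_zero.mp this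
  · -- boundary case: q = πout
    push_neg at hcase
    have hα' : α = 0 := by rw [hαt, max_eq_left (by linarith)]
    have hdpen : ⟪πpen - πout, d⟫ ≤ 0 := by
      have h := hout πpen hpenD
      rw [hb, real_inner_smul_left, real_inner_smul_left] at h
      have h2 : ⟪d, πpen⟫ ≤ ⟪d, πout⟫ := le_of_mul_le_mul_left (by linarith) hκ
      rw [inner_sub_left]
      have e1 := real_inner_comm πpen d
      have e2 := real_inner_comm πout d
      linarith
    have hsplit : πpen - c = (πpen - πout) - (t - 1) • d := by
      rw [hc, hd]
      module
    have hpc : ‖πpen - c‖ ^ 2 = ‖πpen - πout‖ ^ 2 - 2 * ((t - 1) * ⟪πpen - πout, d⟫)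
        + (t - 1) ^ 2 * ‖d‖ ^ 2 := by
      rw [hsplit, norm_sub_sq_real, real_inner_smul_right, norm_smul]
      simp [mul_pow, sq_abs]
    have hoc : ‖πout - c‖ ^ 2 = (t - 1) ^ 2 * ‖d‖ ^ 2 := by
      have : πout - c = -((t - 1) • d) := by rw [hc, hd]; module
      rw [this, norm_neg, norm_smul]
      simp [mul_pow, sq_abs]
    have h := hle πout houtD
    rw [hpc, hoc] at h
    have hz : ‖πpen - πout‖ ^ 2 ≤ 0 := by nlinarith
    have : πpen - πout = 0 := by
      have hn : ‖πpen - πout‖ ^ 2 = 0 := le_antisymm hz (sq_nonneg _)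
      simpa [pow_eq_zero_iff] using hn
    rw [hα']
    simpa using sub_eq_zero.mp this
end
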